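/- In the setting of the previous compatibility (Yetter–Drinfeld-type condition with the anti-involution P playing the role of the antipode), the subspace W of coinvariants of M is a Lie algebra representation of the Lie algebra g⁻ = {u primitive in H : P(u) = -u} via u · ξ = u ⋆ ξ: that is, for u, v ∈ g⁻ and ξ ∈ W, one has u ⋆ ξ ∈ W and (uv - vu) ⋆ ξ = u ⋆ (v ⋆ ξ) - v ⋆ (u ⋆ ξ). -/

import Mathlib

/-!
On a primitive `u` the iterated coproduct is `u ⊗ 1 ⊗ 1 + 1 ⊗ u ⊗ 1 + 1 ⊗ 1 ⊗ u`, so for a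
coinvariant `ξ` the compatibility condition gives
`ρ (u ⋆ ξ) = u ⊗ ξ + P u ⊗ ξ + 1 ⊗ u ⋆ ξ`; the first two terms cancel exactly when `P u = -u`.
-/

open scoped TensorProduct

section

variable {k H : Type*} [CommRing k] [Ring H] [Bialgebra k H]

theorem rTensor_comul_comp_comul_apply_of_comul_eq {u : H}
    (hu : Coalgebra.comul (R := k) u = u ⊗ₜ[k] (1 : H) + (1 : H) ⊗ₜ[k] u) :
    (LinearMap.rTensor H (Coalgebra.comul (R := k)) ∘ₗ Coalgebra.comul (R := k)) u =
      (u ⊗ₜ[k] (1 : H)) ⊗ₜ[k] (1 : H) + ((1 : H) ⊗ₜ[k] u) ⊗ₜ[k] (1 : H)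
        + ((1 : H) ⊗ₜ[k] (1 : H)) ⊗ₜ[k] u := by
  simp [hu, TensorProduct.add_tmul, Bialgebra.comul_one, Algebra.TensorProduct.one_def]

variable {M : Type*} [AddCommGroup M] [Module k M]

theorem coaction_act_eq_one_tmul_of_primitive_of_antiInvariant
    (P : H →ₗ[k] H) (hPone : P 1 = 1) (act : H →ₗ[k] M →ₗ[k] M)
    (hact_one : ∀ m : M, act 1 m = m) (ρ : M →ₗ[k] H ⊗[k] M)
    (sP : ((H ⊗[k] H) ⊗[k] H) →ₗ[k] (H ⊗[k] M) →ₗ[k] (H ⊗[k] M))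
    (hsP : ∀ (u₁ u₂ u₃ v : H) (m : M),
      sP ((u₁ ⊗ₜ[k] u₂) ⊗ₜ[k] u₃) (v ⊗ₜ[k] m) = (u₁ * v * P u₂) ⊗ₜ[k] act u₃ m)
    (hcompat : ∀ (u : H) (ξ : M),
      ρ (act u ξ) =
        sP ((LinearMap.rTensor H (Coalgebra.comul (R := k)) ∘ₗ Coalgebra.comul (R := k)) u)
          (ρ ξ))
    {u : H} {ξ : M}
    (hu : Coalgebra.comul (R := k) u = u ⊗ₜ[k] (1 : H) + (1 : H) ⊗ₜ[k] u) (hPu : P u = -u)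
    (hξ : ρ ξ = (1 : H) ⊗ₜ[k] ξ) :
    ρ (act u ξ) = (1 : H) ⊗ₜ[k] act u ξ := calc
  ρ (act u ξ) = u ⊗ₜ[k] ξ + P u ⊗ₜ[k] ξ + (1 : H) ⊗ₜ[k] act u ξ := by
    rw [hcompat, hξ, rTensor_comul_comp_comul_apply_of_comul_eq hu, map_add, map_add,
      LinearMap.add_apply, LinearMap.add_apply, hsP, hsP, hsP, hPone, hact_one]
    simp only [mul_one, one_mul]
  _ = (1 : H) ⊗ₜ[k] act u ξ := by
    rw [hPu, TensorProduct.neg_tmul, add_neg_cancel, zero_add]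

end

theorem coinvariants_are_representation_of_antiInvariant_primitives_general
    {k H M : Type*} [Field k] [Ring H] [Bialgebra k H]
    [AddCommGroup M] [Module k M]
    (P : H →ₗ[k] H)
    (hPone : P 1 = 1)
    (act : H →ₗ[k] M →ₗ[k] M)
    (hact_mul : ∀ (a b : H) (m : M), act (a * b) m = act a (act b m))
    (hact_one : ∀ m : M, act 1 m = m)
    (ρ : M →ₗ[k] H ⊗[k] M)
    (sP : ((H ⊗[k] H) ⊗[k] H) →ₗ[k] (H ⊗[k] M) →ₗ[k] (H ⊗[k] M))
    (hsP : ∀ (u₁ u₂ u₃ v : H) (m : M),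
      sP ((u₁ ⊗ₜ[k] u₂) ⊗ₜ[k] u₃) (v ⊗ₜ[k] m) = (u₁ * v * P u₂) ⊗ₜ[k] act u₃ m)
    (hcompat : ∀ (u : H) (ξ : M),
      ρ (act u ξ) =
        sP ((LinearMap.rTensor H (Coalgebra.comul (R := k)) ∘ₗ Coalgebra.comul (R := k)) u)
          (ρ ξ)) :
    ∀ (u v : H) (ξ : M),
      Coalgebra.comul (R := k) u = u ⊗ₜ[k] (1 : H) + (1 : H) ⊗ₜ[k] u → P u = -u →
      Coalgebra.comul (R := k) v = v ⊗ₜ[k] (1 : H) + (1 : H) ⊗ₜ[k] v → P v = -v →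
      ρ ξ = (1 : H) ⊗ₜ[k] ξ →
      ρ (act u ξ) = (1 : H) ⊗ₜ[k] act u ξ ∧
      act (u * v - v * u) ξ = act u (act v ξ) - act v (act u ξ) := by
  intro u v ξ hu hPu _ _ hξ
  refine ⟨coaction_act_eq_one_tmul_of_primitive_of_antiInvariant P hPone act hact_one ρ sP hsP
    hcompat hu hPu hξ, ?_⟩
  rw [map_sub, LinearMap.sub_apply, hact_mul, hact_mul]

theorem coinvariants_are_representation_of_antiInvariant_primitives
    {k H M : Type*} [Field k] [Ring H] [Bialgebra k H]
    [AddCommGroup M] [Module k M]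
    (P : H →ₗ[k] H)
    (hPmul : ∀ x y : H, P (x * y) = P y * P x)
    (hPone : P 1 = 1)
    (hPcomul : ∀ x : H,
      Coalgebra.comul (R := k) (P x) = TensorProduct.map P P (Coalgebra.comul (R := k) x))
    (hPinv : ∀ x : H, P (P x) = x)
    (act : H →ₗ[k] M →ₗ[k] M)
    (hact_mul : ∀ (a b : H) (m : M), act (a * b) m = act a (act b m))
    (hact_one : ∀ m : M, act 1 m = m)
    (ρ : M →ₗ[k] H ⊗[k] M)
    (sP : ((H ⊗[k] H) ⊗[k] H) →ₗ[k] (H ⊗[k] M) →ₗ[k] (H ⊗[k] M))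
    (hsP : ∀ (u₁ u₂ u₃ v : H) (m : M),
      sP ((u₁ ⊗ₜ[k] u₂) ⊗ₜ[k] u₃) (v ⊗ₜ[k] m) = (u₁ * v * P u₂) ⊗ₜ[k] act u₃ m)
    (hcompat : ∀ (u : H) (ξ : M),
      ρ (act u ξ) =
        sP ((LinearMap.rTensor H (Coalgebra.comul (R := k)) ∘ₗ Coalgebra.comul (R := k)) u)
          (ρ ξ)) :
    ∀ (u v : H) (ξ : M),
      Coalgebra.comul (R := k) u = u ⊗ₜ[k] (1 : H) + (1 : H) ⊗ₜ[k] u → P u = -u →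
      Coalgebra.comul (R := k) v = v ⊗ₜ[k] (1 : H) + (1 : H) ⊗ₜ[k] v → P v = -v →
      ρ ξ = (1 : H) ⊗ₜ[k] ξ →
      ρ (act u ξ) = (1 : H) ⊗ₜ[k] act u ξ ∧
      act (u * v - v * u) ξ = act u (act v ξ) - act v (act u ξ) :=
  coinvariants_are_representation_of_antiInvariant_primitives_general P hPone act hact_mul hact_one
    ρ sP hsP hcompat
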